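/- arXiv:1102.0982 — 4 statements merged into one kernel-verified Lean document; each statement's English description precedes it below -/
import Mathlib

section
/- If L is a locally compact Hausdorff space having property (*), then its one-point compactification L ∪ {∞} also has property (*). (A (*)-sequence for the compactification is obtained by adjoining to any (*)-sequence for L the singleton family {L}.) -/
/-!
The open embedding `L ↪ L ∪ {∞}` carries the families of a (*)-sequence of `L` to families of
open sets of the compactification that still separate any two points of `L`. A pair containing `∞` is separated by the
single open set `L`, which contains exactly one point of the pair; so it suffices to add the
family `{L}` to the sequence.
-/

/-- Property (*) of Orihuela, Smith and Troyanski: there is a sequence `(𝒰 n)` of families of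
open sets such that any two distinct points `x, y` admit `n` with `{x,y} ∩ ⋃ 𝒰 n` nonempty and
`{x,y} ∩ U` at most a singleton for every `U ∈ 𝒰 n`. -/
def HasStarProp (X : Type*) [TopologicalSpace X] : Prop :=
  ∃ U : ℕ → Set (Set X),
    (∀ n, ∀ V ∈ U n, IsOpen V) ∧
    ∀ x y : X, x ≠ y → ∃ n,
      (({x, y} : Set X) ∩ ⋃₀ U n).Nonempty ∧
      ∀ V ∈ U n, (({x, y} : Set X) ∩ V).Subsingleton

open Set Topology

section StarSeparates

variable {X Y : Type*}

/-- The condition that the family `𝒰` must satisfy for the pair `x, y` in property (*). -/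
def StarSeparates (𝒰 : Set (Set X)) (x y : X) : Prop :=
  (({x, y} : Set X) ∩ ⋃₀ 𝒰).Nonempty ∧ ∀ V ∈ 𝒰, (({x, y} : Set X) ∩ V).Subsingleton

theorem hasStarProp_iff [TopologicalSpace X] :
    HasStarProp X ↔ ∃ U : ℕ → Set (Set X),
      (∀ n, ∀ V ∈ U n, IsOpen V) ∧ ∀ x y : X, x ≠ y → ∃ n, StarSeparates (U n) x y :=
  Iff.rfl

theorem StarSeparates.symm {𝒰 : Set (Set X)} {x y : X} (h : StarSeparates 𝒰 x y) :
    StarSeparates 𝒰 y x := by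
  rwa [StarSeparates, pair_comm]

theorem starSeparates_singleton_of_notMem_of_mem {s : Set X} {x y : X} (hx : x ∉ s)
    (hy : y ∈ s) : StarSeparates {s} x y := by
  have hpair : ({x, y} : Set X) ∩ s = {y} := by
    rw [insert_inter_of_notMem hx, singleton_inter_of_mem hy]
  refine ⟨by rw [sUnion_singleton, hpair]; exact singleton_nonempty y, ?_⟩
  rintro V rfl
  rw [hpair]
  exact subsingleton_singleton

theorem StarSeparates.image {f : Y → X} (hf : f.Injective) {𝒰 : Set (Set Y)} {a b : Y}
    (h : StarSeparates 𝒰 a b) : StarSeparates (image f '' 𝒰) (f a) (f b) := by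
  have hpair (s : Set Y) : ({f a, f b} : Set X) ∩ f '' s = f '' ({a, b} ∩ s) := by
    rw [image_inter hf, image_pair]
  refine ⟨by rw [← image_sUnion, hpair]; exact h.1.image f, ?_⟩
  rintro _ ⟨V, hV, rfl⟩
  rw [hpair]
  exact (h.2 V hV).image f

end StarSeparates

theorem HasStarProp.of_isOpenEmbedding {X Y : Type*} [TopologicalSpace X] [TopologicalSpace Y]
    {f : Y → X} (hf : IsOpenEmbedding f) (hcompl : (range f)ᶜ.Subsingleton)
    (h : HasStarProp Y) : HasStarProp X := by
  obtain ⟨U, hUopen, hU⟩ := hasStarProp_iff.1 h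
  let V : ℕ → Set (Set X)
    | 0 => {range f}
    | n + 1 => image f '' U n
  have hsep_of_notMem {x y : X} (hxy : x ≠ y) (hx : x ∉ range f) : StarSeparates (V 0) x y := by
    have hy : y ∈ range f := by_contra fun hy => hxy (hcompl hx hy)
    exact starSeparates_singleton_of_notMem_of_mem hx hy
  refine hasStarProp_iff.2 ⟨V, ?_, fun x y hxy => ?_⟩
  · rintro (_ | n) W hW
    · rw [mem_singleton_iff.1 hW]
      exact hf.isOpen_range
    · obtain ⟨W, hW, rfl⟩ := hW
      exact hf.isOpenMap W (hUopen n W hW)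
  by_cases hx : x ∈ range f
  · by_cases hy : y ∈ range f
    · obtain ⟨⟨a, rfl⟩, ⟨b, rfl⟩⟩ := And.intro hx hy
      obtain ⟨n, hn⟩ := hU a b (ne_of_apply_ne f hxy)
      exact ⟨n + 1, hn.image hf.injective⟩
    · exact ⟨0, (hsep_of_notMem hxy.symm hy).symm⟩
  · exact ⟨0, hsep_of_notMem hxy hx⟩

theorem hasStar_onePoint_general (L : Type*) [TopologicalSpace L]
    (h : HasStarProp L) : HasStarProp (OnePoint L) :=
  h.of_isOpenEmbedding OnePoint.isOpenEmbedding_coe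
    (OnePoint.compl_range_coe ▸ subsingleton_singleton)

/-- If `L` is a locally compact Hausdorff space having property (*), then its one-point
compactification `L ∪ {∞}` also has property (*). -/
theorem hasStar_onePoint (L : Type*) [TopologicalSpace L] [T2Space L] [LocallyCompactSpace L]
    (h : HasStarProp L) : HasStarProp (OnePoint L) :=
  hasStar_onePoint_general L h
end

section
/- Given t, u ∈ Λ with t ≺ u, there exists r ∈ Λ ∪ {0} with r ≺ t such that τ(s,u) = τ(s,t)⌢τ(t,u) (concatenation of sequences) for every s ∈ (r,t]. -/
/-- An element of Kurepa's tree `Λ`: an injective function `t : α → ω` with countable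
ordinal domain `α` and coinfinite range.  The function is represented as a total function
on ordinals which takes the junk value `0` outside of the domain. -/
structure Lambda : Type 1 where
  toFun : Ordinal.{0} → ℕ
  dom : Ordinal.{0}
  countable : dom.card ≤ Cardinal.aleph0
  inj : ∀ β γ, β < dom → γ < dom → toFun β = toFun γ → β = γ
  coinfinite : {n : ℕ | ∀ β, β < dom → toFun β ≠ n}.Infinite
  junk : ∀ β, ¬ β < dom → toFun β = 0

/-- The tree order on `Λ`: `s ≼ t` iff `t` extends `s`. -/
def Lambda.le (s t : Lambda) : Prop :=
  s.dom ≤ t.dom ∧ ∀ β, β < s.dom → s.toFun β = t.toFun β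

/-- The strict tree order on `Λ`. -/
def Lambda.lt (s t : Lambda) : Prop := Lambda.le s t ∧ s ≠ t

/-- `r ≺ s` for `r ∈ Λ ∪ {0}` (`none` plays the role of the extra least element `0`). -/
def precLt : Option Lambda → Lambda → Prop
  | none, _ => True
  | some r, s => Lambda.lt r s

/-- The interval `(r, t] = {s ∈ Λ : r ≺ s ≼ t}`, with `r ∈ Λ ∪ {0}`. -/
def lamIoc (r : Option Lambda) (t : Lambda) : Set Lambda :=
  {s | precLt r s ∧ Lambda.le s t}

/-- The position of the minimum of `t` on the ordinal interval `[δ, β)`. -/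
noncomputable def minPos (t : Ordinal.{0} → ℕ) (δ β : Ordinal.{0}) : Ordinal.{0} :=
  sInf {ξ | δ ≤ ξ ∧ ξ < β ∧ ∀ η, δ ≤ η → η < β → t ξ ≤ t η}

lemma minPos_lt (t : Ordinal.{0} → ℕ) {δ β : Ordinal.{0}} (h : δ < β) : minPos t δ β < β := by
  have hne : {ξ : Ordinal.{0} | δ ≤ ξ ∧ ξ < β ∧ ∀ η, δ ≤ η → η < β → t ξ ≤ t η}.Nonempty := by
    have h1 : {n : ℕ | ∃ ξ : Ordinal.{0}, δ ≤ ξ ∧ ξ < β ∧ t ξ = n}.Nonempty :=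
      ⟨t δ, δ, le_refl _, h, rfl⟩
    obtain ⟨ξ, hξ1, hξ2, hξ3⟩ := Nat.sInf_mem h1
    refine ⟨ξ, hξ1, hξ2, fun η h1' h2' => ?_⟩
    rw [hξ3]
    exact Nat.sInf_le ⟨η, h1', h2', rfl⟩
  obtain ⟨ξ, hξ⟩ := hne
  calc minPos t δ β ≤ ξ := csInf_le (OrderBot.bddBelow _) hξ
    _ < β := hξ.2.1

/-- The sequence `τ` computed from the starting ordinal `β₀` downwards: `τ` is obtained by
repeatedly passing from `β` to the position of the minimum of `t` on `[δ, β)`, stopping upon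
reaching `δ`.  The resulting finite sequence `(β_k, …, β_1)` is recorded as a list in the
order `[β_k, …, β_1]` (so concatenation of the lists corresponds to `⌢`). -/
noncomputable def tauFrom (δ : Ordinal.{0}) (t : Ordinal.{0} → ℕ) : Ordinal.{0} → List Ordinal.{0} :=
  WellFounded.fix wellFounded_lt
    (fun β IH => if h : δ < β then IH (minPos t δ β) (minPos_lt t h) ++ [minPos t δ β] else [])

/-- The finite sequence `τ(s,t)` of ordinals, for `s ≼ t` in `Λ`. -/
noncomputable def tau (s t : Lambda) : List Ordinal.{0} :=
  tauFrom s.dom t.toFun t.dom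

/-- `ℓ(s,t)`, the length of `τ(s,t)`. -/
noncomputable def ell (s t : Lambda) : ℕ := (tau s t).length

/-- The underlying set of the `Λ`-duplicate: `D = Λ × {1, -1}`. -/
abbrev Dup : Type 1 := Lambda × ℤˣ

/-- The basic open sets `W(r,t,i)` of the `Λ`-duplicate. -/
noncomputable def Wset (r : Option Lambda) (t : Lambda) (i : ℤˣ) : Set Dup :=
  {q | q.1 ∈ lamIoc r t ∧ q.2 = (-1) ^ ell q.1 t * i}

/-- The collection of all basic open sets `W(r,t,i)` with `r ≺ t`. -/
noncomputable def WBasis : Set (Set Dup) :=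
  {S | ∃ (r : Option Lambda) (t : Lambda) (i : ℤˣ), precLt r t ∧ S = Wset r t i}

/-- The topology of the `Λ`-duplicate, generated by the basic sets `W(r,t,i)`. -/
noncomputable instance : TopologicalSpace Dup := TopologicalSpace.generateFrom WBasis


/-! ### Auxiliary lemmas -/

lemma minPos_mem (t : Ordinal.{0} → ℕ) {δ β : Ordinal.{0}} (h : δ < β) :
    minPos t δ β ∈ {ξ : Ordinal.{0} | δ ≤ ξ ∧ ξ < β ∧ ∀ η, δ ≤ η → η < β → t ξ ≤ t η} := by
  have hne : {ξ : Ordinal.{0} | δ ≤ ξ ∧ ξ < β ∧ ∀ η, δ ≤ η → η < β → t ξ ≤ t η}.Nonempty := by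
    have h1 : {n : ℕ | ∃ ξ : Ordinal.{0}, δ ≤ ξ ∧ ξ < β ∧ t ξ = n}.Nonempty :=
      ⟨t δ, δ, le_refl _, h, rfl⟩
    obtain ⟨ξ, hξ1, hξ2, hξ3⟩ := Nat.sInf_mem h1
    refine ⟨ξ, hξ1, hξ2, fun η h1' h2' => ?_⟩
    rw [hξ3]
    exact Nat.sInf_le ⟨η, h1', h2', rfl⟩
  exact csInf_mem hne

lemma tauFrom_unfold (δ : Ordinal.{0}) (t : Ordinal.{0} → ℕ) (β : Ordinal.{0}) :
    tauFrom δ t β =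
      if h : δ < β then tauFrom δ t (minPos t δ β) ++ [minPos t δ β] else [] := by
  unfold tauFrom
  rw [WellFounded.fix_eq]

lemma minPos_congr (δ : Ordinal.{0}) (f g : Ordinal.{0} → ℕ) (β : Ordinal.{0})
    (hfg : ∀ ξ, δ ≤ ξ → ξ < β → f ξ = g ξ) : minPos f δ β = minPos g δ β := by
  unfold minPos
  congr 1
  ext ξ
  constructor
  · rintro ⟨h1, h2, h3⟩
    refine ⟨h1, h2, fun η hη1 hη2 => ?_⟩
    rw [← hfg ξ h1 h2, ← hfg η hη1 hη2]; exact h3 η hη1 hη2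
  · rintro ⟨h1, h2, h3⟩
    refine ⟨h1, h2, fun η hη1 hη2 => ?_⟩
    rw [hfg ξ h1 h2, hfg η hη1 hη2]; exact h3 η hη1 hη2

lemma tauFrom_congr (δ : Ordinal.{0}) (f g : Ordinal.{0} → ℕ) :
    ∀ β : Ordinal.{0}, (∀ ξ, δ ≤ ξ → ξ < β → f ξ = g ξ) → tauFrom δ f β = tauFrom δ g β := by
  intro β
  induction β using Ordinal.induction with
  | h β IH =>
    intro hfg
    rw [tauFrom_unfold δ f β, tauFrom_unfold δ g β]
    by_cases h : δ < β
    · rw [dif_pos h, dif_pos h]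
      have hmin : minPos f δ β = minPos g δ β := minPos_congr δ f g β hfg
      rw [hmin]
      have hμ := minPos_mem g h
      have := IH (minPos g δ β) hμ.2.1
        (fun ξ h1 h2 => hfg ξ h1 (h2.trans hμ.2.1))
      rw [this]
    · rw [dif_neg h, dif_neg h]

lemma minPos_shrink (f : Ordinal.{0} → ℕ) (δ' δ β : Ordinal.{0}) (hδ : δ' ≤ δ) (hβ : δ < β)
    (H1 : ∀ η, δ' ≤ η → η < δ → f δ ≤ f η)
    (inj : ∀ ξ η, ξ < β → η < β → f ξ = f η → ξ = η) :
    minPos f δ' β = minPos f δ β := by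
  obtain ⟨hμ1, hμ2, hμ3⟩ := minPos_mem f hβ
  set μ := minPos f δ β with hμdef
  have hβ' : δ' < β := lt_of_le_of_lt hδ hβ
  -- f μ is ≤ f η on all of [δ', β)
  have key : ∀ η, δ' ≤ η → η < β → f μ ≤ f η := by
    intro η h1 h2
    rcases le_or_gt δ η with h3 | h3
    · exact hμ3 η h3 h2
    · exact le_trans (hμ3 δ le_rfl hβ) (H1 η h1 h3)
  obtain ⟨hν1, hν2, hν3⟩ := minPos_mem f hβ'
  set ν := minPos f δ' β with hνdef
  have h1 : f ν ≤ f μ := hν3 μ (le_trans hδ hμ1) hμ2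
  have h2 : f μ ≤ f ν := key ν hν1 hν2
  exact inj ν μ hν2 hμ2 (le_antisymm h1 h2)

lemma tauFrom_split (f : Ordinal.{0} → ℕ) (δ' δ : Ordinal.{0}) (hδ : δ' ≤ δ)
    (H1 : ∀ η, δ' ≤ η → η < δ → f δ ≤ f η) :
    ∀ β : Ordinal.{0}, δ ≤ β → (∀ ξ η, ξ < β → η < β → f ξ = f η → ξ = η) →
      tauFrom δ' f β = tauFrom δ' f δ ++ tauFrom δ f β := by
  intro β
  induction β using Ordinal.induction with
  | h β IH =>
    intro hδβ inj
    rcases eq_or_lt_of_le hδβ with h | h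
    · subst h
      rw [tauFrom_unfold δ' f δ]
      conv_rhs => rw [tauFrom_unfold δ f δ]
      rw [dif_neg (lt_irrefl δ), List.append_nil, tauFrom_unfold]
    · have hβ' : δ' < β := lt_of_le_of_lt hδ h
      obtain ⟨hμ1, hμ2, hμ3⟩ := minPos_mem f h
      have hmin : minPos f δ' β = minPos f δ β := minPos_shrink f δ' δ β hδ h H1 inj
      rw [tauFrom_unfold δ' f β, dif_pos hβ', hmin]
      conv_rhs => rw [tauFrom_unfold δ f β, dif_pos h]
      have hIH := IH (minPos f δ β) hμ2 hμ1
        (fun ξ η h1 h2 => inj ξ η (h1.trans hμ2) (h2.trans hμ2))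
      rw [hIH, List.append_assoc]

lemma Lambda.eq_of_toFun_dom (s t : Lambda) (h1 : s.toFun = t.toFun) (h2 : s.dom = t.dom) :
    s = t := by
  cases s; cases t; simp_all

lemma Lambda.dom_lt_of_lt {r s : Lambda} (h : Lambda.lt r s) : r.dom < s.dom := by
  rcases lt_or_eq_of_le h.1.1 with h' | h'
  · exact h'
  · exfalso
    apply h.2
    apply Lambda.eq_of_toFun_dom _ _ _ h'
    funext ξ
    by_cases hξ : ξ < r.dom
    · exact h.1.2 ξ hξ
    · rw [r.junk ξ hξ, s.junk ξ (h' ▸ hξ)]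

/-- The main computation: if all values of `u` on `[s.dom, t.dom)` are at least `u t.dom`,
then `τ(s,u) = τ(s,t) ⌢ τ(t,u)`. -/
lemma tau_concat_of_high (s t u : Lambda) (hst : Lambda.le s t) (htu : Lambda.le t u)
    (H1 : ∀ η, s.dom ≤ η → η < t.dom → u.toFun t.dom ≤ u.toFun η) :
    tau s u = tau s t ++ tau t u := by
  have hsplit := tauFrom_split u.toFun s.dom t.dom hst.1 H1 u.dom htu.1
    (fun ξ η h1 h2 he => u.inj ξ η h1 h2 he)
  have hcongr : tauFrom s.dom u.toFun t.dom = tauFrom s.dom t.toFun t.dom :=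
    tauFrom_congr s.dom u.toFun t.toFun t.dom (fun ξ _ h2 => (htu.2 ξ h2).symm)
  unfold tau
  rw [hsplit, hcongr]

/-- Given `t ≺ u` in `Λ`, there is `r ∈ Λ ∪ {0}` with `r ≺ t` such that
`τ(s,u) = τ(s,t) ⌢ τ(t,u)` for every `s ∈ (r,t]`. -/
theorem tau_concat (t u : Lambda) (h : Lambda.lt t u) :
    ∃ r : Option Lambda, precLt r t ∧
      ∀ s ∈ lamIoc r t, tau s u = tau s t ++ tau t u := by
  classical
  set B : Set Ordinal.{0} := {η | η < t.dom ∧ u.toFun η < u.toFun t.dom} with hBdef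
  have hBfin : B.Finite := by
    have hinj : Set.InjOn u.toFun B := fun a ha b hb hab =>
      u.inj a b (lt_of_lt_of_le ha.1 h.1.1) (lt_of_lt_of_le hb.1 h.1.1) hab
    have himg : (u.toFun '' B).Finite := by
      apply (Set.finite_Iio (u.toFun t.dom)).subset
      rintro n ⟨η, hη, rfl⟩
      exact hη.2
    exact (Set.Finite.of_finite_image himg hinj)
  by_cases hB : B.Nonempty
  · -- take r = restriction of t to γ = max B
    obtain ⟨γ, hγB, hγmax⟩ : ∃ γ ∈ B, ∀ η ∈ B, η ≤ γ := by
      have hne : hBfin.toFinset.Nonempty := by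
        rwa [Set.Finite.toFinset_nonempty]
      refine ⟨hBfin.toFinset.max' hne, ?_, ?_⟩
      · have := hBfin.toFinset.max'_mem hne
        rwa [Set.Finite.mem_toFinset] at this
      · intro η hη
        exact hBfin.toFinset.le_max' η (hBfin.mem_toFinset.2 hη)
    have hγt : γ < t.dom := hγB.1
    set r : Lambda :=
      { toFun := fun ξ => if ξ < γ then t.toFun ξ else 0
        dom := γ
        countable := le_trans (Ordinal.card_le_card hγt.le) t.countable
        inj := by
          intro β₁ β₂ h1 h2 he
          simp only [if_pos h1, if_pos h2] at he
          exact t.inj β₁ β₂ (h1.trans hγt) (h2.trans hγt) he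
        coinfinite := by
          apply t.coinfinite.mono
          intro n hn β hβ
          simp only [if_pos hβ]
          exact hn β (hβ.trans hγt)
        junk := fun β hβ => if_neg hβ } with hrdef
    have hrt : Lambda.lt r t := by
      constructor
      · exact ⟨hγt.le, fun β hβ => if_pos hβ⟩
      · intro he
        have : r.dom = t.dom := by rw [he]
        simp only [hrdef] at this
        exact absurd this hγt.ne
    refine ⟨some r, hrt, ?_⟩
    rintro s ⟨hrs, hst⟩
    have hγs : γ < s.dom := Lambda.dom_lt_of_lt hrs
    apply tau_concat_of_high s t u hst h.1
    intro η h1 h2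
    by_contra hcon
    push_neg at hcon
    have : η ∈ B := ⟨h2, hcon⟩
    exact absurd (lt_of_lt_of_le hγs h1) (not_lt.2 (hγmax η this))
  · refine ⟨none, trivial, ?_⟩
    rintro s ⟨-, hst⟩
    apply tau_concat_of_high s t u hst h.1
    intro η h1 h2
    by_contra hcon
    push_neg at hcon
    exact hB ⟨η, h2, hcon⟩
end

section
/- The Λ-duplicate D is a Hausdorff topological space: any two distinct points of D have disjoint basic open neighbourhoods of the form W(r,t,i). -/
lemma Lambda.ext' {s t : Lambda} (h1 : s.toFun = t.toFun) (h2 : s.dom = t.dom) : s = t := by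
  cases s; cases t; simp_all

lemma Lambda.le_refl' (s : Lambda) : Lambda.le s s := ⟨le_refl _, fun _ _ => rfl⟩

lemma Lambda.le_antisymm' {s t : Lambda} (h1 : Lambda.le s t) (h2 : Lambda.le t s) : s = t := by
  have hd : s.dom = t.dom := le_antisymm h1.1 h2.1
  refine Lambda.ext' (funext fun β => ?_) hd
  by_cases hb : β < s.dom
  · exact h1.2 β hb
  · rw [s.junk β hb, t.junk β (hd ▸ hb)]

lemma tauFrom_self (δ : Ordinal.{0}) (f : Ordinal.{0} → ℕ) : tauFrom δ f δ = [] := by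
  rw [tauFrom, WellFounded.fix_eq]
  exact dif_neg (lt_irrefl δ)

lemma ell_self (t : Lambda) : ell t t = 0 := by
  simp [ell, tau, tauFrom_self]

lemma mem_Wset_self (r : Option Lambda) (t : Lambda) (i : ℤˣ) (h : precLt r t) :
    (t, i) ∈ Wset r t i := by
  refine ⟨⟨h, Lambda.le_refl' t⟩, ?_⟩
  simp [ell_self]

/-- Restriction of a Λ-element to a smaller domain. -/
noncomputable def Lambda.restrict (s : Lambda) (γ : Ordinal.{0}) (hγ : γ ≤ s.dom) : Lambda where
  toFun β := if β < γ then s.toFun β else 0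
  dom := γ
  countable := le_trans (Ordinal.card_le_card hγ) s.countable
  inj β β' hb hb' h := by
    simp only [if_pos hb, if_pos hb'] at h
    exact s.inj β β' (lt_of_lt_of_le hb hγ) (lt_of_lt_of_le hb' hγ) h
  coinfinite := by
    refine s.coinfinite.mono fun n hn β hb => ?_
    simp only [if_pos hb]
    exact hn β (lt_of_lt_of_le hb hγ)
  junk β hb := if_neg hb

lemma restrict_lt (s : Lambda) (γ : Ordinal.{0}) (hγ : γ < s.dom) :
    Lambda.lt (s.restrict γ hγ.le) s := by
  refine ⟨⟨hγ.le, fun β hb => if_pos hb⟩, fun h => ?_⟩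
  have : (s.restrict γ hγ.le).dom = s.dom := by rw [h]
  exact absurd this (ne_of_lt hγ)

lemma dom_lt_of_lt {m u : Lambda} (h : Lambda.lt m u) : m.dom < u.dom := by
  rcases lt_or_eq_of_le h.1.1 with h' | h'
  · exact h'
  · exfalso
    apply h.2
    refine Lambda.ext' (funext fun β => ?_) h'
    by_cases hb : β < m.dom
    · exact h.1.2 β hb
    · rw [m.junk β hb, u.junk β (h' ▸ hb)]

lemma dup_separation :
    ∀ p q : Dup, p ≠ q →
      ∃ r₁ r₂ : Option Lambda, precLt r₁ p.1 ∧ precLt r₂ q.1 ∧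
        p ∈ Wset r₁ p.1 p.2 ∧ q ∈ Wset r₂ q.1 q.2 ∧
        Wset r₁ p.1 p.2 ∩ Wset r₂ q.1 q.2 = ∅ := by
  rintro ⟨s, i⟩ ⟨t, j⟩ hpq
  by_cases hst : s = t
  · -- same first component, different signs
    subst hst
    have hij : i ≠ j := fun h => hpq (by rw [h])
    refine ⟨none, none, trivial, trivial, mem_Wset_self _ _ _ trivial,
      mem_Wset_self _ _ _ trivial, ?_⟩
    ext ⟨u, k⟩
    simp only [Set.mem_inter_iff, Set.mem_empty_iff_false, iff_false]
    rintro ⟨⟨-, h1⟩, ⟨-, h2⟩⟩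
    exact hij (mul_left_cancel ((h1.symm.trans h2) : (-1 : ℤˣ) ^ ell u s * i = _))
  · by_cases hle : Lambda.le s t
    · -- s ≺ t
      refine ⟨none, some s, trivial, ⟨hle, hst⟩, mem_Wset_self _ _ _ trivial,
        mem_Wset_self _ _ _ ⟨hle, hst⟩, ?_⟩
      ext ⟨u, k⟩
      simp only [Set.mem_inter_iff, Set.mem_empty_iff_false, iff_false]
      rintro ⟨⟨⟨-, hus⟩, -⟩, ⟨⟨hsu, -⟩, -⟩⟩
      exact hsu.2 (Lambda.le_antisymm' hsu.1 hus)
    · by_cases hle' : Lambda.le t s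
      · -- t ≺ s
        refine ⟨some t, none, ⟨hle', Ne.symm hst⟩, trivial,
          mem_Wset_self _ _ _ ⟨hle', Ne.symm hst⟩, mem_Wset_self _ _ _ trivial, ?_⟩
        ext ⟨u, k⟩
        simp only [Set.mem_inter_iff, Set.mem_empty_iff_false, iff_false]
        rintro ⟨⟨⟨htu, -⟩, -⟩, ⟨⟨-, hut⟩, -⟩⟩
        exact htu.2 (Lambda.le_antisymm' htu.1 hut)
      · -- incomparable: split at the first difference
        set A : Set Ordinal.{0} :=
          {β | β < s.dom ∧ β < t.dom ∧ s.toFun β ≠ t.toFun β} with hA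
        have hAne : A.Nonempty := by
          by_contra hemp
          rw [Set.not_nonempty_iff_eq_empty] at hemp
          have hagree : ∀ β, β < s.dom → β < t.dom → s.toFun β = t.toFun β := by
            intro β h1 h2
            by_contra h3
            exact absurd (hemp ▸ (⟨h1, h2, h3⟩ : β ∈ A)) (Set.notMem_empty β)
          rcases le_total s.dom t.dom with h | h
          · exact hle ⟨h, fun β hb => hagree β hb (lt_of_lt_of_le hb h)⟩
          · exact hle' ⟨h, fun β hb => (hagree β (lt_of_lt_of_le hb h) hb).symm⟩
        have hγmem := csInf_mem hAne
        set γ := sInf A with hγ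
        obtain ⟨hγs, hγt, hγne⟩ := hγmem
        have hmin : ∀ β, β < γ → β < s.dom → β < t.dom → s.toFun β = t.toFun β := by
          intro β hb h1 h2
          by_contra h3
          exact absurd (csInf_le (OrderBot.bddBelow A) (⟨h1, h2, h3⟩ : β ∈ A))
            (not_le_of_gt hb)
        set m := s.restrict γ hγs.le with hm
        have hms : Lambda.lt m s := restrict_lt s γ hγs
        have hmt : Lambda.lt m t := by
          refine ⟨⟨hγt.le, fun β hb => ?_⟩, fun h => ?_⟩
          · show (if β < γ then s.toFun β else 0) = t.toFun β
            have hb' : β < γ := hb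
            rw [if_pos hb']
            exact hmin β hb' (lt_trans hb hγs) (lt_trans hb hγt)
          · have : m.dom = t.dom := by rw [h]
            exact absurd this (ne_of_lt hγt)
        refine ⟨some m, some m, hms, hmt, mem_Wset_self _ _ _ hms,
          mem_Wset_self _ _ _ hmt, ?_⟩
        ext ⟨u, k⟩
        simp only [Set.mem_inter_iff, Set.mem_empty_iff_false, iff_false]
        rintro ⟨⟨⟨hmu, hus⟩, -⟩, ⟨⟨hmu', hut⟩, -⟩⟩
        have hγu : γ < u.dom := dom_lt_of_lt hmu
        exact hγne ((hus.2 γ hγu).symm.trans (hut.2 γ hγu))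

/-- The `Λ`-duplicate `D` is Hausdorff: any two distinct points of `D` have disjoint basic
open neighbourhoods of the form `W(r,t,i)`. -/
theorem dup_hausdorff :
    T2Space Dup ∧
    ∀ p q : Dup, p ≠ q →
      ∃ r₁ r₂ : Option Lambda, precLt r₁ p.1 ∧ precLt r₂ q.1 ∧
        p ∈ Wset r₁ p.1 p.2 ∧ q ∈ Wset r₂ q.1 q.2 ∧
        Wset r₁ p.1 p.2 ∩ Wset r₂ q.1 q.2 = ∅ := by
  refine ⟨?_, dup_separation⟩
  constructor
  intro p q hpq
  obtain ⟨r₁, r₂, h₁, h₂, hp, hq, hdisj⟩ := dup_separation p q hpq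
  refine ⟨Wset r₁ p.1 p.2, Wset r₂ q.1 q.2, ?_, ?_, hp, hq, ?_⟩
  · exact TopologicalSpace.GenerateOpen.basic _ ⟨r₁, p.1, p.2, h₁, rfl⟩
  · exact TopologicalSpace.GenerateOpen.basic _ ⟨r₂, q.1, q.2, h₂, rfl⟩
  · rw [Set.disjoint_iff_inter_eq_empty]; exact hdisj
end

section
/- If X is a topological space with cardinality at most the continuum, then X is Gruenhage if and only if there is a sequence (U_n)_{n=1}^∞ of open subsets of X with the property that for any two distinct points x, y ∈ X, the set {x,y} ∩ U_n is a singleton for some n. -/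
/-!
For a Gruenhage family `𝒰ₙ` with common intersection `Rₙ`, the sets `V \ Rₙ` (`V ∈ 𝒰ₙ`) are
pairwise disjoint and determine `V`, so `𝒰ₙ` has at most `#X + 1 ≤ 𝔠` members and admits an
injective coding `c : 𝒰ₙ → (ℕ → Bool)`. If `x ∈ V ∌ y`, then either `y ∉ ⋃ 𝒰ₙ`, or `y` lies in
exactly one member `V' ≠ V`, and then the open set `⋃ {W ∈ 𝒰ₙ | c W k = c V k}` contains `x` but
not `y` for any `k` with `c V k ≠ c V' k`. These countably many open sets, over all `n`, form the
required sequence. Conversely a separating sequence gives the Gruenhage families `{Uₙ}` with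
`Rₙ = ∅`.
-/

/-- A topological space is Gruenhage if there are a sequence `(𝒰 n)` of families of open sets
and sets `R n` such that any two distinct points are separated by some member of some `𝒰 n`
(i.e. `{x,y} ∩ U` is a singleton), and two distinct members of `𝒰 n` always intersect
exactly in `R n`. -/
def Gruenhage (X : Type*) [TopologicalSpace X] : Prop :=
  ∃ (U : ℕ → Set (Set X)) (R : ℕ → Set X),
    (∀ n, ∀ V ∈ U n, IsOpen V) ∧
    (∀ x y : X, x ≠ y → ∃ n, ∃ V ∈ U n, ∃ z, ({x, y} : Set X) ∩ V = {z}) ∧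
    (∀ n, ∀ V ∈ U n, ∀ V' ∈ U n, V ≠ V' → V ∩ V' = R n)

open Set Cardinal

namespace Set

variable {X : Type*}

theorem exists_pair_inter_eq_singleton_iff_xor {x y : X} (hxy : x ≠ y) (U : Set X) :
    (∃ z, ({x, y} : Set X) ∩ U = {z}) ↔ Xor (x ∈ U) (y ∈ U) := by
  constructor
  · rintro ⟨z, hz⟩
    have hx := Set.ext_iff.1 hz x
    have hy := Set.ext_iff.1 hz y
    have hz' := Set.ext_iff.1 hz z
    simp only [mem_inter_iff, mem_insert_iff, mem_singleton_iff] at hx hy hz'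
    grind
  · rintro (⟨hx, hy⟩ | ⟨hy, hx⟩)
    · exact ⟨x, by ext w; simp only [mem_inter_iff, mem_insert_iff, mem_singleton_iff]; grind⟩
    · exact ⟨y, by ext w; simp only [mem_inter_iff, mem_insert_iff, mem_singleton_iff]; grind⟩

theorem PairwiseDisjoint.exists_injOn_option {𝒟 : Set (Set X)} (h𝒟 : 𝒟.PairwiseDisjoint id) :
    ∃ p : Set X → Option X, 𝒟.InjOn p := by
  classical
  refine ⟨fun D => if hD : D.Nonempty then some hD.some else none, fun D hD D' hD' hp => ?_⟩
  by_cases hne : D.Nonempty <;> by_cases hne' : D'.Nonempty <;>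
    simp only [dif_pos, dif_neg, hne, hne', reduceCtorEq, Option.some.injEq, not_false_eq_true]
      at hp
  · exact h𝒟.elim hD hD' (not_disjoint_iff.2 ⟨_, hne.some_mem, hp ▸ hne'.some_mem⟩)
  · rw [not_nonempty_iff_eq_empty.1 hne, not_nonempty_iff_eq_empty.1 hne']

variable {𝒱 : Set (Set X)} {R : Set X}

theorem injOn_sdiff_of_pairwise_inter_eq (hR : 𝒱.Pairwise fun V V' => V ∩ V' = R) :
    𝒱.InjOn (· \ R) := by
  intro V hV V' hV' h
  by_contra hne
  have hVV' := hR hV hV' hne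
  refine hne (ext fun x => ?_)
  by_cases hx : x ∈ R
  · rw [← hVV'] at hx
    exact iff_of_true hx.1 hx.2
  · simpa [hx] using Set.ext_iff.1 h x

theorem pairwiseDisjoint_sdiff_of_pairwise_inter_eq (hR : 𝒱.Pairwise fun V V' => V ∩ V' = R) :
    𝒱.PairwiseDisjoint (· \ R) := by
  intro V hV V' hV' hne
  rw [Function.onFun, disjoint_iff_inter_eq_empty, ← sdiff_inter_distrib_right, hR hV hV' hne,
    sdiff_self]

theorem exists_injOn_nat_bool_of_pairwise_inter_eq (hX : #X ≤ 𝔠)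
    (hR : 𝒱.Pairwise fun V V' => V ∩ V' = R) : ∃ c : Set X → ℕ → Bool, 𝒱.InjOn c := by
  have hsdiff := injOn_sdiff_of_pairwise_inter_eq hR
  obtain ⟨p, hp⟩ := PairwiseDisjoint.exists_injOn_option
    (hsdiff.pairwiseDisjoint_image.2 (pairwiseDisjoint_sdiff_of_pairwise_inter_eq hR))
  obtain ⟨e⟩ : Nonempty (Option X ↪ (ℕ → Bool)) := by
    have hcode : #(ℕ → Bool) = 𝔠 := by simp
    rw [← lift_mk_le', mk_option, hcode, lift_continuum, lift_le_continuum,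
      ← add_one_of_aleph0_le aleph0_le_continuum]
    exact add_le_add_left hX 1
  exact ⟨e ∘ p ∘ (· \ R), e.injective.comp_injOn (hp.comp hsdiff (mapsTo_image _ _))⟩

end Set

theorem exists_seq_isOpen_xor_of_pairwise_inter_eq {X : Type*} [TopologicalSpace X]
    (hX : #X ≤ 𝔠) {𝒱 : Set (Set X)} {R : Set X} (hopen : ∀ V ∈ 𝒱, IsOpen V)
    (hR : 𝒱.Pairwise fun V V' => V ∩ V' = R) :
    ∃ G : ℕ → Set X, (∀ k, IsOpen (G k)) ∧
      ∀ V ∈ 𝒱, ∀ x y, Xor (x ∈ V) (y ∈ V) → ∃ k, Xor (x ∈ G k) (y ∈ G k) := by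
  obtain ⟨c, hc⟩ := exists_injOn_nat_bool_of_pairwise_inter_eq hX hR
  set 𝒢 : Set (Set X) :=
    insert (⋃₀ 𝒱) (range fun kb : ℕ × Bool => ⋃₀ {V ∈ 𝒱 | c V kb.1 = kb.2})
  have h𝒢open : ∀ G ∈ 𝒢, IsOpen G := by
    simp only [𝒢, forall_mem_insert, forall_mem_range]
    exact ⟨isOpen_sUnion hopen, fun kb => isOpen_sUnion fun V hV => hopen V hV.1⟩
  have h𝒢sep : ∀ V ∈ 𝒱, ∀ x ∈ V, ∀ y ∉ V, ∃ G ∈ 𝒢, x ∈ G ∧ y ∉ G := by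
    intro V hV x hx y hy
    by_cases hy𝒱 : y ∈ ⋃₀ 𝒱
    swap
    · exact ⟨_, mem_insert _ _, mem_sUnion_of_mem hx hV, hy𝒱⟩
    obtain ⟨V', hV', hyV'⟩ := hy𝒱
    have hne : V ≠ V' := fun h => hy (h ▸ hyV')
    obtain ⟨k, hk⟩ := Function.ne_iff.1 (hc.ne hV hV' hne)
    refine ⟨_, mem_insert_of_mem _ (mem_range_self (k, c V k)),
      mem_sUnion_of_mem hx ⟨hV, rfl⟩, ?_⟩
    rintro ⟨W, ⟨hW, hWk⟩, hyW⟩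
    have hWV' : W ≠ V' := by rintro rfl; exact hk hWk.symm
    -- `V'` meets every other member of `𝒱` only in `R ⊆ V`
    have hyR : y ∈ R := hR hW hV' hWV' ▸ ⟨hyW, hyV'⟩
    exact hy (hR hV hV' hne ▸ hyR).1
  obtain ⟨G, hG⟩ : ∃ G : ℕ → Set X, 𝒢 = range G :=
    (countable_insert.2 (countable_range _)).exists_eq_range (insert_nonempty _ _)
  refine ⟨G, fun k => h𝒢open _ (hG ▸ mem_range_self k), ?_⟩
  rintro V hV x y (⟨hx, hy⟩ | ⟨hy, hx⟩)
  · obtain ⟨W, hW, hxW, hyW⟩ := h𝒢sep V hV x hx y hy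
    obtain ⟨k, rfl⟩ : W ∈ range G := hG ▸ hW
    exact ⟨k, Or.inl ⟨hxW, hyW⟩⟩
  · obtain ⟨W, hW, hyW, hxW⟩ := h𝒢sep V hV y hy x hx
    obtain ⟨k, rfl⟩ : W ∈ range G := hG ▸ hW
    exact ⟨k, Or.inr ⟨hyW, hxW⟩⟩

/-- If `X` has cardinality at most the continuum, then `X` is Gruenhage iff there is a
sequence `(U n)` of open subsets of `X` such that for any distinct `x, y` the set
`{x,y} ∩ U n` is a singleton for some `n`. -/
theorem gruenhage_iff_sequence (X : Type*) [TopologicalSpace X]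
    (hX : Cardinal.mk X ≤ Cardinal.continuum) :
    Gruenhage X ↔ ∃ U : ℕ → Set X, (∀ n, IsOpen (U n)) ∧
      ∀ x y : X, x ≠ y → ∃ n, ∃ z, ({x, y} : Set X) ∩ U n = {z} := by
  constructor
  · rintro ⟨𝒰, R, hopen, hsep, hinter⟩
    choose G hGopen hGsep using fun n => exists_seq_isOpen_xor_of_pairwise_inter_eq hX (hopen n)
      fun V hV V' hV' => hinter n V hV V' hV'
    refine ⟨fun m => G m.unpair.1 m.unpair.2, fun m => hGopen _ _, fun x y hxy => ?_⟩
    obtain ⟨n, V, hV, hxyV⟩ := hsep x y hxy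
    obtain ⟨k, hk⟩ := hGsep n V hV x y ((exists_pair_inter_eq_singleton_iff_xor hxy V).1 hxyV)
    refine ⟨Nat.pair n k, (exists_pair_inter_eq_singleton_iff_xor hxy _).2 ?_⟩
    simpa only [Nat.unpair_pair] using hk
  · rintro ⟨U, hU, hsep⟩
    refine ⟨fun n => {U n}, fun _ => ∅, by simpa using hU, fun x y hxy => ?_, by simp⟩
    obtain ⟨n, hn⟩ := hsep x y hxy
    exact ⟨n, U n, rfl, hn⟩
end
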